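/- For K_col, K₀, ω₀ > 0 and complex s with s ≠ 0, s ≠ ±jω₀, and with ω = e^{2πj/3}: (K_Ra(s) + ωK_Rb(s) + ω²K_Rc(s))·(K_Ra(s) + ω²K_Rb(s) + ωK_Rc(s)) = K₀²/(s²+ω₀²). -/
import Mathlib
open Complex

noncomputable def KRa (Kcol K0 ω0 : ℝ) (s : ℂ) : ℂ :=
  (((2*K0 + Kcol : ℝ) : ℂ) * s^2 + (Kcol : ℂ) * (ω0 : ℂ)^2) / (3 * s * (s^2 + (ω0:ℂ)^2))

noncomputable def KRb (Kcol K0 ω0 : ℝ) (s : ℂ) : ℂ :=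
  (((Kcol - K0 : ℝ) : ℂ) * s^2 + Real.sqrt 3 * (K0:ℂ) * (ω0:ℂ) * s + (Kcol:ℂ) * (ω0:ℂ)^2)
    / (3 * s * (s^2 + (ω0:ℂ)^2))

noncomputable def KRc (Kcol K0 ω0 : ℝ) (s : ℂ) : ℂ :=
  (((Kcol - K0 : ℝ) : ℂ) * s^2 - Real.sqrt 3 * (K0:ℂ) * (ω0:ℂ) * s + (Kcol:ℂ) * (ω0:ℂ)^2)
    / (3 * s * (s^2 + (ω0:ℂ)^2))

theorem tilt_yaw_eigenvalue_product (Kcol K0 ω0 : ℝ) (hK : 0 < Kcol) (hK0 : 0 < K0)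
    (hω : 0 < ω0) (s : ℂ) (hs : s ≠ 0) (hs1 : s ≠ Complex.I * ω0) (hs2 : s ≠ -(Complex.I * ω0)) :
    (KRa Kcol K0 ω0 s + Complex.exp (2*Real.pi*Complex.I/3) * KRb Kcol K0 ω0 s
      + (Complex.exp (2*Real.pi*Complex.I/3))^2 * KRc Kcol K0 ω0 s)
    * (KRa Kcol K0 ω0 s + (Complex.exp (2*Real.pi*Complex.I/3))^2 * KRb Kcol K0 ω0 s
      + Complex.exp (2*Real.pi*Complex.I/3) * KRc Kcol K0 ω0 s)
    = (K0 : ℂ)^2 / (s^2 + (ω0:ℂ)^2) := by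
  have hw : Complex.exp (2*Real.pi*Complex.I/3) = (-1 + (Real.sqrt 3 : ℂ) * Complex.I)/2 := by
    have h : (2*Real.pi*Complex.I/3 : ℂ) = ((2*Real.pi/3 : ℝ) : ℂ) * Complex.I := by
      push_cast; ring
    rw [h, Complex.exp_mul_I, ← Complex.ofReal_cos, ← Complex.ofReal_sin]
    have hc : Real.cos (2*Real.pi/3) = -(1/2) := by
      have : (2*Real.pi/3 : ℝ) = Real.pi - Real.pi/3 := by ring
      rw [this, Real.cos_pi_sub, Real.cos_pi_div_three]
    have hsin : Real.sin (2*Real.pi/3) = Real.sqrt 3 / 2 := by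
      have : (2*Real.pi/3 : ℝ) = Real.pi - Real.pi/3 := by ring
      rw [this, Real.sin_pi_sub, Real.sin_pi_div_three]
    rw [hc, hsin]; push_cast; ring
  have h3 : ((Real.sqrt 3 : ℝ) : ℂ)^2 = 3 := by
    rw [← Complex.ofReal_pow, Real.sq_sqrt (by norm_num : (0:ℝ) ≤ 3)]
    norm_num
  have hI := Complex.I_sq
  have hden : s^2 + (ω0:ℂ)^2 ≠ 0 := by
    have hfac : s^2 + (ω0:ℂ)^2 = (s - Complex.I*ω0) * (s + Complex.I*ω0) := by
      linear_combination ((ω0:ℂ)^2) * hI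
    rw [hfac]
    exact mul_ne_zero (sub_ne_zero.mpr hs1) (fun h => hs2 (by linear_combination h))
  set w := Complex.exp (2*Real.pi*Complex.I/3) with hwdef
  set a := ((Real.sqrt 3 : ℝ) : ℂ) with hadef
  set A : ℂ := ((2*K0 + Kcol : ℝ) : ℂ) * s^2 + (Kcol : ℂ) * (ω0 : ℂ)^2 with hA
  set B : ℂ := ((Kcol - K0 : ℝ) : ℂ) * s^2 + a * (K0:ℂ) * (ω0:ℂ) * s + (Kcol:ℂ) * (ω0:ℂ)^2 with hB
  set C : ℂ := ((Kcol - K0 : ℝ) : ℂ) * s^2 - a * (K0:ℂ) * (ω0:ℂ) * s + (Kcol:ℂ) * (ω0:ℂ)^2 with hC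
  set D : ℂ := 3 * s * (s^2 + (ω0:ℂ)^2) with hD
  have hDne : D ≠ 0 := by
    apply mul_ne_zero (mul_ne_zero (by norm_num) hs) hden
  have num1 : A + w*B + w^2*C = 3*(K0:ℂ)*s*(s + Complex.I*(ω0:ℂ)) := by
    rw [hw, hA, hB, hC]
    push_cast
    linear_combination (Complex.I*(K0:ℂ)*(ω0:ℂ)*s
        + Complex.I^2*((Kcol:ℂ)-(K0:ℂ))*s^2/4 - Complex.I^2*a*(K0:ℂ)*(ω0:ℂ)*s/4
        + Complex.I^2*(Kcol:ℂ)*(ω0:ℂ)^2/4) * h3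
      + ((3:ℂ)/4*(((Kcol:ℂ)-(K0:ℂ))*s^2 - a*(K0:ℂ)*(ω0:ℂ)*s + (Kcol:ℂ)*(ω0:ℂ)^2)) * hI
  have num2 : A + w^2*B + w*C = 3*(K0:ℂ)*s*(s - Complex.I*(ω0:ℂ)) := by
    rw [hw, hA, hB, hC]
    push_cast
    linear_combination (-Complex.I*(K0:ℂ)*(ω0:ℂ)*s
        + Complex.I^2*((Kcol:ℂ)-(K0:ℂ))*s^2/4 + Complex.I^2*a*(K0:ℂ)*(ω0:ℂ)*s/4
        + Complex.I^2*(Kcol:ℂ)*(ω0:ℂ)^2/4) * h3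
      + ((3:ℂ)/4*(((Kcol:ℂ)-(K0:ℂ))*s^2 + a*(K0:ℂ)*(ω0:ℂ)*s + (Kcol:ℂ)*(ω0:ℂ)^2)) * hI
  have e1 : KRa Kcol K0 ω0 s + w * KRb Kcol K0 ω0 s + w^2 * KRc Kcol K0 ω0 s
      = (A + w*B + w^2*C) / D := by
    unfold KRa KRb KRc
    rw [hA, hB, hC, hD, hadef]
    ring
  have e2 : KRa Kcol K0 ω0 s + w^2 * KRb Kcol K0 ω0 s + w * KRc Kcol K0 ω0 s
      = (A + w^2*B + w*C) / D := by
    unfold KRa KRb KRc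
    rw [hA, hB, hC, hD, hadef]
    ring
  rw [e1, e2, num1, num2, div_mul_div_comm, div_eq_div_iff (mul_ne_zero hDne hDne) hden]
  rw [hD]
  linear_combination (-9*(K0:ℂ)^2*s^2*(s^2+(ω0:ℂ)^2)*(ω0:ℂ)^2) * hI
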